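/- arXiv:2102.08573 — 5 statements merged into one kernel-verified Lean document; each statement's English description precedes it below -/
import Mathlib

section
/- Let y₁,…,yₙ ∈ ℝ^d, σ > 0, c₁, c₂ ≥ 0, τ ∈ (0,1], and let ε' > 0 satisfy ε' ≤ τ and ε' + ε'/τ < 1. Suppose I* ⊆ {1,…,n} with |I*| ≥ (1 − ε')n, let x̄* = (∑_{i∈I*} yᵢ)/|I*|, and assume λmax(∑_{i∈I*}(yᵢ − x̄*)(yᵢ − x̄*)ᵀ) ≤ c₁²σ²n. Let x ∈ ℝ^d and h ∈ [0,1]ⁿ be such that ∑_{i=1}^{n} hᵢ ≤ ε'n and λmax(∑_{i=1}^{n}(1−hᵢ)(yᵢ − x)(yᵢ − x)ᵀ) ≤ (c₁² + c₂²)σ²n. Set x⁺ = (∑_{i=1}^{n}(1−hᵢ)·1{hᵢ ≤ τ}·yᵢ)/(∑_{i=1}^{n}(1−hᵢ)·1{hᵢ ≤ τ}). Then ‖x⁺ − x̄*‖₂ ≤ ( √((c₁² + c₂²)σ²/(1 − ε'/τ)) + √(c₁²σ²/(1 − ε')) )·√( (ε'/τ)/(1 − ε' − ε'/τ) ), and in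 particular ‖x⁺ − x̄*‖₂ ≤ σ·(γ(ε')·c₂ + β(ε')), where γ(ε) = √( (ε/τ)/((1 − ε/τ)(1 − ε − ε/τ)) ) and β(ε) = c₁·((1 − ε/τ)^{−1/2} + (1 − ε)^{−1/2})·√( (ε/τ)/(1 − ε − ε/τ) ). -/
open MeasureTheory Real
open scoped BigOperators RealInnerProductSpace Classical

/-- Discrete Cauchy–Schwarz with a nonnegative weight. -/
lemma weighted_CS {n : ℕ} (c f : Fin n → ℝ) (hc : ∀ i, 0 ≤ c i) :
    (∑ i, c i * f i) ^ 2 ≤ (∑ i, c i) * (∑ i, c i * f i ^ 2) := by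
  have h := Finset.sum_mul_sq_le_sq_mul_sq Finset.univ
    (fun i => Real.sqrt (c i)) (fun i => Real.sqrt (c i) * f i)
  have h1 : ∀ i : Fin n, Real.sqrt (c i) * (Real.sqrt (c i) * f i) = c i * f i := fun i => by
    rw [← mul_assoc, Real.mul_self_sqrt (hc i)]
  have h2 : ∀ i : Fin n, Real.sqrt (c i) ^ 2 = c i := fun i => Real.sq_sqrt (hc i)
  have h3 : ∀ i : Fin n, (Real.sqrt (c i) * f i) ^ 2 = c i * f i ^ 2 := fun i => by
    rw [mul_pow, h2]
  simpa only [h1, h2, h3] using h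

/-- Pure algebra part of the contraction estimate. -/
lemma scalar_algebra (δ k A B H G σm P ρ : ℝ)
    (hδ0 : 0 ≤ δ) (hkδ : k = 1 - δ) (hk0 : 0 < k)
    (hA0 : 0 ≤ A) (hB0 : 0 ≤ B)
    (hCS1 : P ^ 2 ≤ δ * (A - G))
    (hCS2 : σm ^ 2 ≤ k * H)
    (hCS3 : σm ^ 2 ≤ δ * (B - H))
    (hGeq : G = H - 2 * ρ * σm + k * ρ ^ 2)
    (hPeq : P = k * ρ - σm) :
    ρ ≤ Real.sqrt (δ * A / k) + Real.sqrt (δ * B / k) := by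
  have hσmB : σm ≤ Real.sqrt (δ * k * B) := by
    have hsq' : σm ^ 2 ≤ δ * k * B := by nlinarith [hCS2, hCS3, hδ0, hk0.le]
    calc σm ≤ |σm| := le_abs_self _
    _ = Real.sqrt (σm ^ 2) := (Real.sqrt_sq_eq_abs _).symm
    _ ≤ Real.sqrt (δ * k * B) := Real.sqrt_le_sqrt hsq'
  have hsqrtdiv : ∀ C : ℝ, 0 ≤ C → Real.sqrt (δ * k * C) / k = Real.sqrt (δ * C / k) := by
    intro C hC
    have hCnn : 0 ≤ δ * C / k := div_nonneg (mul_nonneg hδ0 hC) hk0.le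
    rw [show δ * k * C = (δ * C / k) * k ^ 2 by field_simp]
    rw [Real.sqrt_mul hCnn, Real.sqrt_sq hk0.le, mul_div_cancel_right₀ _ hk0.ne']
  rcases le_or_gt (k * ρ) σm with hc | hc
  · have h0 : ρ * k ≤ Real.sqrt (δ * k * B) := by
      calc ρ * k = k * ρ := by ring
      _ ≤ σm := hc
      _ ≤ _ := hσmB
    have hρ : ρ ≤ Real.sqrt (δ * k * B) / k := (le_div_iff₀ hk0).mpr h0
    rw [hsqrtdiv B hB0] at hρ
    have := Real.sqrt_nonneg (δ * A / k)
    linarith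
  · have hkey : (k * ρ - σm) ^ 2 ≤ δ * k * A := by
      have h1 : (k * ρ - σm) ^ 2 ≤ δ * A - δ * H + 2 * δ * ρ * σm - δ * k * ρ ^ 2 := by
        nlinarith [hCS1, hGeq, hPeq]
      nlinarith [mul_le_mul_of_nonneg_left h1 hk0.le,
        mul_le_mul_of_nonneg_left hCS2 hδ0, sq_nonneg (k * ρ - σm)]
    have h2 : k * ρ - σm ≤ Real.sqrt (δ * k * A) := by
      calc k * ρ - σm = |k * ρ - σm| := (abs_of_pos (by linarith)).symm
      _ = Real.sqrt ((k * ρ - σm) ^ 2) := (Real.sqrt_sq_eq_abs _).symm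
      _ ≤ _ := Real.sqrt_le_sqrt hkey
    have h3 : ρ * k ≤ Real.sqrt (δ * k * A) + Real.sqrt (δ * k * B) := by linarith
    have hρ : ρ ≤ (Real.sqrt (δ * k * A) + Real.sqrt (δ * k * B)) / k :=
      (le_div_iff₀ hk0).mpr h3
    rwa [add_div, hsqrtdiv A hA0, hsqrtdiv B hB0] at hρ

/-- Core scalar contraction estimate. -/
lemma scalar_core {n : ℕ} (a b s : Fin n → ℝ) (ρ δ k A B : ℝ)
    (ha : ∀ i, 0 ≤ a i) (hb : ∀ i, 0 ≤ b i)
    (hsa : ∑ i, a i = 1) (hsb : ∑ i, b i = 1)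
    (has : ∑ i, a i * s i = ρ) (hbs : ∑ i, b i * s i = 0)
    (hδ : δ = 1 - ∑ i, min (a i) (b i)) (hkδ : k = 1 - δ) (hk0 : 0 < k)
    (hA : A = ∑ i, a i * (s i - ρ) ^ 2) (hB : B = ∑ i, b i * s i ^ 2) :
    ρ ≤ Real.sqrt (δ * A / k) + Real.sqrt (δ * B / k) := by
  have hm0 : ∀ i : Fin n, 0 ≤ min (a i) (b i) := fun i => le_min (ha i) (hb i)
  have hp0 : ∀ i : Fin n, 0 ≤ a i - min (a i) (b i) :=
    fun i => sub_nonneg.mpr (min_le_left _ _)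
  have hq0 : ∀ i : Fin n, 0 ≤ b i - min (a i) (b i) :=
    fun i => sub_nonneg.mpr (min_le_right _ _)
  have hsm : ∑ i, min (a i) (b i) = k := by rw [hkδ, hδ]; ring
  have hsp : ∑ i, (a i - min (a i) (b i)) = δ := by
    rw [Finset.sum_sub_distrib, hsa, hsm, hkδ]; ring
  have hsq : ∑ i, (b i - min (a i) (b i)) = δ := by
    rw [Finset.sum_sub_distrib, hsb, hsm, hkδ]; ring
  have hδ0 : 0 ≤ δ := hsq ▸ Finset.sum_nonneg (fun i _ => hq0 i)
  have hA0 : 0 ≤ A := hA ▸ Finset.sum_nonneg (fun i _ => mul_nonneg (ha i) (sq_nonneg _))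
  have hB0 : 0 ≤ B := hB ▸ Finset.sum_nonneg (fun i _ => mul_nonneg (hb i) (sq_nonneg _))
  set H : ℝ := ∑ i, min (a i) (b i) * s i ^ 2 with hH
  set G : ℝ := ∑ i, min (a i) (b i) * (s i - ρ) ^ 2 with hG
  set σm : ℝ := ∑ i, min (a i) (b i) * s i with hσm
  set P : ℝ := ∑ i, (a i - min (a i) (b i)) * (s i - ρ) with hP
  refine scalar_algebra δ k A B H G σm P ρ hδ0 hkδ hk0 hA0 hB0 ?_ ?_ ?_ ?_ ?_
  · have h := weighted_CS (fun i => a i - min (a i) (b i)) (fun i => s i - ρ) hp0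
    have e1 : ∑ i, (a i - min (a i) (b i)) * (s i - ρ) ^ 2 = A - G := by
      rw [hA, hG, ← Finset.sum_sub_distrib]
      exact Finset.sum_congr rfl (fun i _ => by ring)
    rw [hsp, e1] at h
    exact h
  · have h := weighted_CS (fun i => min (a i) (b i)) s hm0
    rwa [hsm] at h
  · have h := weighted_CS (fun i => b i - min (a i) (b i)) s hq0
    have e1 : ∑ i, (b i - min (a i) (b i)) * s i = -σm := by
      have e0 : ∑ i, (b i - min (a i) (b i)) * s i
          = ∑ i, (b i * s i - min (a i) (b i) * s i) :=
        Finset.sum_congr rfl (fun i _ => by ring)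
      rw [e0, Finset.sum_sub_distrib, hbs, ← hσm]; ring
    have e2 : ∑ i, (b i - min (a i) (b i)) * s i ^ 2 = B - H := by
      rw [hB, hH, ← Finset.sum_sub_distrib]
      exact Finset.sum_congr rfl (fun i _ => by ring)
    rw [hsq, e1, e2] at h
    calc σm ^ 2 = (-σm) ^ 2 := by ring
    _ ≤ δ * (B - H) := h
  · have e1 : ∑ i, min (a i) (b i) * (s i - ρ) ^ 2
        = ∑ i, (min (a i) (b i) * s i ^ 2 - 2 * ρ * (min (a i) (b i) * s i)
            + ρ ^ 2 * min (a i) (b i)) :=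
      Finset.sum_congr rfl (fun i _ => by ring)
    rw [hG, e1, Finset.sum_add_distrib, Finset.sum_sub_distrib,
      ← Finset.mul_sum, ← Finset.mul_sum, hsm, ← hσm, ← hH]
    ring
  · have e1 : ∑ i, (a i - min (a i) (b i)) * (s i - ρ)
        = ∑ i, (a i * s i - ρ * a i - min (a i) (b i) * s i + ρ * min (a i) (b i)) :=
      Finset.sum_congr rfl (fun i _ => by ring)
    rw [hP, e1]
    rw [show ∀ f g p q : Fin n → ℝ, (∑ i, (f i - g i - p i + q i))
        = ∑ i, f i - ∑ i, g i - ∑ i, p i + ∑ i, q i from fun f g p q => by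
      rw [Finset.sum_add_distrib, Finset.sum_sub_distrib, Finset.sum_sub_distrib]]
    rw [has, ← Finset.mul_sum, hsa, ← hσm, ← Finset.mul_sum, hsm]
    ring

/-- `λmax (∑ i, w i • (y i - x) (y i - x)ᵀ)`, expressed as the supremum of the
associated quadratic form over the unit sphere. -/
noncomputable def lamMax {n d : ℕ} (w : Fin n → ℝ)
    (y : Fin n → EuclideanSpace ℝ (Fin d)) (x : EuclideanSpace ℝ (Fin d)) : ℝ :=
  ⨆ v : Metric.sphere (0 : EuclideanSpace ℝ (Fin d)) 1,
    ∑ i, w i * (⟪y i - x, (v : EuclideanSpace ℝ (Fin d))⟫) ^ 2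

lemma le_lamMax {n d : ℕ} (w : Fin n → ℝ) (hw : ∀ i, 0 ≤ w i)
    (y : Fin n → EuclideanSpace ℝ (Fin d)) (x : EuclideanSpace ℝ (Fin d))
    (v : EuclideanSpace ℝ (Fin d)) (hv : ‖v‖ = 1) :
    ∑ i, w i * (⟪y i - x, v⟫) ^ 2 ≤ lamMax w y x := by
  have hvmem : v ∈ Metric.sphere (0 : EuclideanSpace ℝ (Fin d)) 1 :=
    mem_sphere_zero_iff_norm.mpr hv
  have hbdd : BddAbove (Set.range fun u : Metric.sphere (0 : EuclideanSpace ℝ (Fin d)) 1 =>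
      ∑ i, w i * (⟪y i - x, (u : EuclideanSpace ℝ (Fin d))⟫) ^ 2) := by
    refine ⟨∑ i, w i * ‖y i - x‖ ^ 2, ?_⟩
    rintro r ⟨u, rfl⟩
    refine Finset.sum_le_sum fun i _ => ?_
    have hu : ‖(u : EuclideanSpace ℝ (Fin d))‖ = 1 := mem_sphere_zero_iff_norm.mp u.2
    have habs : |⟪y i - x, (u : EuclideanSpace ℝ (Fin d))⟫| ≤ ‖y i - x‖ := by
      have := abs_real_inner_le_norm (y i - x) (u : EuclideanSpace ℝ (Fin d))
      rwa [hu, mul_one] at this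
    have hsq : (⟪y i - x, (u : EuclideanSpace ℝ (Fin d))⟫) ^ 2 ≤ ‖y i - x‖ ^ 2 := by
      rw [← sq_abs]
      exact pow_le_pow_left₀ (abs_nonneg _) habs 2
    exact mul_le_mul_of_nonneg_left hsq (hw i)
  exact le_ciSup hbdd ⟨v, hvmem⟩

/-- `γ(ε)` from Theorem 3 of the paper (with threshold `τ`). -/
noncomputable def gam (τ ε : ℝ) : ℝ :=
  Real.sqrt ((ε / τ) / ((1 - ε / τ) * (1 - ε - ε / τ)))

/-- `β(ε)` from Theorem 3 of the paper (with threshold `τ` and constant `c₁`). -/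
noncomputable def bet (c₁ τ ε : ℝ) : ℝ :=
  c₁ * ((Real.sqrt (1 - ε / τ))⁻¹ + (Real.sqrt (1 - ε))⁻¹) *
    Real.sqrt ((ε / τ) / (1 - ε - ε / τ))

lemma second_bound (σ c₁ c₂ τ ε' : ℝ) (hσ : 0 < σ) (hc₁ : 0 ≤ c₁) (hc₂ : 0 ≤ c₂)
    (hτ0 : 0 < τ)
    (he1 : 0 < 1 - ε' / τ) (hε1 : 0 < 1 - ε') (hD1 : 0 < 1 - ε' - ε' / τ)
    (he0 : 0 ≤ ε' / τ) :
    (Real.sqrt ((c₁^2 + c₂^2) * σ^2 / (1 - ε' / τ)) +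
        Real.sqrt (c₁^2 * σ^2 / (1 - ε'))) *
        Real.sqrt ((ε' / τ) / (1 - ε' - ε' / τ)) ≤ σ * (gam τ ε' * c₂ + bet c₁ τ ε') := by
  have hr1 : 0 < Real.sqrt (1 - ε' / τ) := Real.sqrt_pos.mpr he1
  have hr2 : 0 < Real.sqrt (1 - ε') := Real.sqrt_pos.mpr hε1
  have hD0 : 0 ≤ (ε' / τ) / (1 - ε' - ε' / τ) := div_nonneg he0 hD1.le
  -- identity for the c₁ term
  have hid2 : Real.sqrt (c₁^2 * σ^2 / (1 - ε')) = c₁ * σ / Real.sqrt (1 - ε') := by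
    rw [show c₁^2 * σ^2 = (c₁ * σ)^2 by ring, Real.sqrt_div (sq_nonneg _),
      Real.sqrt_sq (mul_nonneg hc₁ hσ.le)]
  -- bound for the mixed term
  have hid1 : Real.sqrt ((c₁^2 + c₂^2) * σ^2 / (1 - ε' / τ))
      ≤ (c₁ + c₂) * σ / Real.sqrt (1 - ε' / τ) := by
    have hle : (c₁^2 + c₂^2) * σ^2 / (1 - ε' / τ) ≤ ((c₁ + c₂) * σ)^2 / (1 - ε' / τ) := by
      have : (c₁^2 + c₂^2) * σ^2 ≤ ((c₁ + c₂) * σ)^2 := by nlinarith [mul_nonneg hc₁ hc₂, sq_nonneg σ]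
      gcongr
    calc Real.sqrt ((c₁^2 + c₂^2) * σ^2 / (1 - ε' / τ))
        ≤ Real.sqrt (((c₁ + c₂) * σ)^2 / (1 - ε' / τ)) := Real.sqrt_le_sqrt hle
    _ = (c₁ + c₂) * σ / Real.sqrt (1 - ε' / τ) := by
        rw [Real.sqrt_div (sq_nonneg _), Real.sqrt_sq (by positivity)]
  -- gam as quotient
  have hgam : gam τ ε' = Real.sqrt ((ε' / τ) / (1 - ε' - ε' / τ)) / Real.sqrt (1 - ε' / τ) := by
    have harg : ∀ E : ℝ, E / ((1 - E) * (1 - ε' - E))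
        = (E / (1 - ε' - E)) / (1 - E) := by
      intro E
      rw [div_div, mul_comm (1 - ε' - E) (1 - E)]
    rw [gam, harg (ε' / τ), Real.sqrt_div hD0]
  have step : (Real.sqrt ((c₁^2 + c₂^2) * σ^2 / (1 - ε' / τ)) +
        Real.sqrt (c₁^2 * σ^2 / (1 - ε'))) *
        Real.sqrt ((ε' / τ) / (1 - ε' - ε' / τ))
      ≤ ((c₁ + c₂) * σ / Real.sqrt (1 - ε' / τ) + c₁ * σ / Real.sqrt (1 - ε')) *
        Real.sqrt ((ε' / τ) / (1 - ε' - ε' / τ)) := by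
    apply mul_le_mul_of_nonneg_right _ (Real.sqrt_nonneg _)
    rw [hid2]
    exact add_le_add hid1 le_rfl
  refine step.trans (le_of_eq ?_)
  rw [bet, hgam]
  have h1 : Real.sqrt (1 - ε' / τ) ≠ 0 := hr1.ne'
  have h2 : Real.sqrt (1 - ε') ≠ 0 := hr2.ne'
  field_simp
  ring

set_option maxHeartbeats 1600000 in
/-- the deterministic contraction step of the iterative
`ℓ_p`-minimization and thresholding algorithm. -/
theorem contraction_step {n d : ℕ} (y : Fin n → EuclideanSpace ℝ (Fin d))
    (σ c₁ c₂ τ ε' : ℝ) (hσ : 0 < σ) (hc₁ : 0 ≤ c₁) (hc₂ : 0 ≤ c₂)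
    (hτ0 : 0 < τ) (hτ1 : τ ≤ 1)
    (hε'0 : 0 < ε') (hε'τ : ε' ≤ τ) (hlt : ε' + ε' / τ < 1)
    (Istar : Finset (Fin n)) (hcard : (1 - ε') * n ≤ Istar.card)
    (xbar : EuclideanSpace ℝ (Fin d))
    (hxbar : xbar = ((Istar.card : ℝ))⁻¹ • ∑ i ∈ Istar, y i)
    (hcovI : lamMax (fun i => if i ∈ Istar then (1:ℝ) else 0) y xbar ≤ c₁^2 * σ^2 * n)
    (x : EuclideanSpace ℝ (Fin d)) (h : Fin n → ℝ)
    (hh : ∀ i, h i ∈ Set.Icc (0:ℝ) 1)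
    (hhsum : ∑ i, h i ≤ ε' * n)
    (hcovh : lamMax (fun i => 1 - h i) y x ≤ (c₁^2 + c₂^2) * σ^2 * n)
    (xplus : EuclideanSpace ℝ (Fin d))
    (hxplus : xplus = (∑ i, (1 - h i) * (if h i ≤ τ then (1:ℝ) else 0))⁻¹ •
        ∑ i, ((1 - h i) * (if h i ≤ τ then (1:ℝ) else 0)) • y i) :
    ‖xplus - xbar‖ ≤
      (Real.sqrt ((c₁^2 + c₂^2) * σ^2 / (1 - ε' / τ)) +
        Real.sqrt (c₁^2 * σ^2 / (1 - ε'))) *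
        Real.sqrt ((ε' / τ) / (1 - ε' - ε' / τ)) ∧
    ‖xplus - xbar‖ ≤ σ * (gam τ ε' * c₂ + bet c₁ τ ε') := by
  -- basic positivity facts
  have he0 : 0 < ε' / τ := div_pos hε'0 hτ0
  have heε : ε' ≤ ε' / τ := by
    rw [le_div_iff₀ hτ0]; exact mul_le_of_le_one_right hε'0.le hτ1
  have h1e : 0 < 1 - ε' / τ := by linarith
  have h1ε : 0 < 1 - ε' := by linarith
  have hD1 : 0 < 1 - ε' - ε' / τ := by linarith
  have hD0 : 0 ≤ (ε' / τ) / (1 - ε' - ε' / τ) := div_nonneg he0.le hD1.le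
  have hRHS1 : (0:ℝ) ≤ (Real.sqrt ((c₁^2 + c₂^2) * σ^2 / (1 - ε' / τ)) +
        Real.sqrt (c₁^2 * σ^2 / (1 - ε'))) *
        Real.sqrt ((ε' / τ) / (1 - ε' - ε' / τ)) :=
    mul_nonneg (add_nonneg (Real.sqrt_nonneg _) (Real.sqrt_nonneg _)) (Real.sqrt_nonneg _)
  -- it suffices to prove the first bound
  suffices hmain : ‖xplus - xbar‖ ≤
      (Real.sqrt ((c₁^2 + c₂^2) * σ^2 / (1 - ε' / τ)) +
        Real.sqrt (c₁^2 * σ^2 / (1 - ε'))) *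
        Real.sqrt ((ε' / τ) / (1 - ε' - ε' / τ)) by
    exact ⟨hmain, hmain.trans
      (second_bound σ c₁ c₂ τ ε' hσ hc₁ hc₂ hτ0 h1e h1ε hD1 he0.le)⟩
  by_cases hz : xplus - xbar = 0
  · rw [hz, norm_zero]; exact hRHS1
  -- nontrivial case
  obtain ⟨w, hwdef⟩ : ∃ w : Fin n → ℝ,
      ∀ i, w i = (1 - h i) * (if h i ≤ τ then 1 else 0) := ⟨_, fun _ => rfl⟩
  simp only [← hwdef] at hxplus
  obtain ⟨W, hWdef⟩ : ∃ W : ℝ, W = ∑ i, w i := ⟨_, rfl⟩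
  rw [← hWdef] at hxplus
  set N : ℝ := (Istar.card : ℝ) with hNdef
  have hh0 : ∀ i, 0 ≤ h i := fun i => (hh i).1
  have hh1 : ∀ i, h i ≤ 1 := fun i => (hh i).2
  have hw0 : ∀ i, 0 ≤ w i := by
    intro i; rw [hwdef i]
    by_cases hc : h i ≤ τ
    · rw [if_pos hc, mul_one]; linarith [hh1 i]
    · rw [if_neg hc, mul_zero]
  have hw1 : ∀ i, w i ≤ 1 := by
    intro i; rw [hwdef i]
    by_cases hc : h i ≤ τ
    · rw [if_pos hc, mul_one]; linarith [hh0 i]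
    · rw [if_neg hc, mul_zero]; norm_num
  have hwh : ∀ i, w i ≤ 1 - h i := by
    intro i; rw [hwdef i]
    by_cases hc : h i ≤ τ
    · rw [if_pos hc, mul_one]
    · rw [if_neg hc, mul_zero]; linarith [hh1 i]
  have hwlb : ∀ i, 1 - h i / τ ≤ w i := by
    intro i; rw [hwdef i]
    by_cases hc : h i ≤ τ
    · rw [if_pos hc, mul_one]
      have hha : h i ≤ h i / τ := by
        rw [le_div_iff₀ hτ0]; exact mul_le_of_le_one_right (hh0 i) hτ1
      linarith
    · rw [if_neg hc, mul_zero]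
      have hha : 1 < h i / τ := (one_lt_div hτ0).mpr (lt_of_not_ge hc)
      linarith
  -- n > 0
  have hn0 : 0 < (n:ℝ) := by
    rcases Nat.eq_zero_or_pos n with h0 | h0
    · exfalso; apply hz; subst h0
      have hI : Istar = ∅ := Finset.eq_empty_of_isEmpty _
      rw [hxplus, hxbar]; simp [hI]
    · exact_mod_cast h0
  -- bounds on W and N
  have hWlb : (1 - ε' / τ) * n ≤ W := by
    have h1 : ∑ i, (1 - h i / τ) ≤ W := hWdef ▸ Finset.sum_le_sum (fun i _ => hwlb i)
    have h2 : ∑ i, (1 - h i / τ) = n - (∑ i, h i) / τ := by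
      rw [Finset.sum_sub_distrib, ← Finset.sum_div]
      simp [Finset.card_univ]
    have h3 : (∑ i, h i) / τ ≤ (ε' * n) / τ := by gcongr
    have h4 : (ε' * n) / τ = (ε' / τ) * n := by ring
    rw [h2] at h1; rw [h4] at h3; linarith only [h1, h3]
  have hW0 : 0 < W := lt_of_lt_of_le (by positivity) hWlb
  have hWn : W ≤ n := by
    rw [hWdef]
    calc ∑ i, w i ≤ ∑ i : Fin n, (1:ℝ) := Finset.sum_le_sum (fun i _ => hw1 i)
    _ = n := by simp
  have hNlb : (1 - ε') * n ≤ N := hcard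
  have hN0 : 0 < N := lt_of_lt_of_le (by positivity) hNlb
  have hNn : N ≤ n := by
    rw [hNdef]
    exact_mod_cast (Finset.card_le_univ Istar).trans_eq (by simp)
  -- the unit direction
  obtain ⟨ρ, hρdef⟩ : ∃ r : ℝ, r = ‖xplus - xbar‖ := ⟨_, rfl⟩
  rw [← hρdef]
  have hznorm : 0 < ρ := hρdef ▸ norm_pos_iff.mpr hz
  obtain ⟨v, hvdef⟩ : ∃ u : EuclideanSpace ℝ (Fin d), u = ρ⁻¹ • (xplus - xbar) := ⟨_, rfl⟩
  have hvnorm : ‖v‖ = 1 := by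
    rw [hvdef, norm_smul, Real.norm_eq_abs, abs_inv, abs_of_pos hznorm, ← hρdef,
      inv_mul_cancel₀ hznorm.ne']
  have hinner_z : ⟪xplus - xbar, v⟫ = ρ := by
    have hne : ρ ≠ 0 := hznorm.ne'
    rw [hvdef, real_inner_smul_right, real_inner_self_eq_norm_sq, ← hρdef]
    field_simp

  -- weights and scalar projections
  have ha0 : ∀ i : Fin n, 0 ≤ w i / W := fun i => div_nonneg (hw0 i) hW0.le
  have hb0 : ∀ i : Fin n, 0 ≤ (if i ∈ Istar then N⁻¹ else 0 : ℝ) := by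
    intro i; split
    · exact inv_nonneg.mpr hN0.le
    · exact le_rfl
  have hsa : ∑ i, w i / W = 1 := by
    rw [← Finset.sum_div, ← hWdef, div_self hW0.ne']
  have hsb : ∑ i, (if i ∈ Istar then N⁻¹ else 0 : ℝ) = 1 := by
    rw [Finset.sum_ite_mem, Finset.univ_inter, Finset.sum_const, nsmul_eq_mul,
      ← hNdef, mul_inv_cancel₀ hN0.ne']
  -- the a-mean is xplus
  have hsum_a_smul : ∑ i, (w i / W) • (y i - xbar) = xplus - xbar := by
    have h1 : ∑ i, (w i / W) • y i = xplus := by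
      rw [hxplus, Finset.smul_sum]
      exact Finset.sum_congr rfl (fun i _ => by rw [smul_smul, ← div_eq_inv_mul])
    have h2 : ∑ i, (w i / W) • xbar = xbar := by
      rw [← Finset.sum_smul, hsa, one_smul]
    simp only [smul_sub]
    rw [Finset.sum_sub_distrib, h1, h2]
  have has : ∑ i, (w i / W) * ⟪y i - xbar, v⟫ = ρ := by
    calc ∑ i, (w i / W) * ⟪y i - xbar, v⟫
        = ∑ i, ⟪(w i / W) • (y i - xbar), v⟫ := by
          exact Finset.sum_congr rfl (fun i _ => (real_inner_smul_left _ _ _).symm)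
    _ = ⟪∑ i, (w i / W) • (y i - xbar), v⟫ := (sum_inner _ _ _).symm
    _ = ⟪xplus - xbar, v⟫ := by rw [hsum_a_smul]
    _ = ρ := hinner_z
  -- the b-mean is xbar
  have hyI : ∑ i ∈ Istar, y i = N • xbar := by
    rw [hxbar, smul_smul, mul_inv_cancel₀ hN0.ne', one_smul]
  have hIsum0 : ∑ i ∈ Istar, (y i - xbar) = 0 := by
    rw [Finset.sum_sub_distrib, hyI, Finset.sum_const, ← Nat.cast_smul_eq_nsmul ℝ, ← hNdef,
      sub_self]
  have hbs : ∑ i, (if i ∈ Istar then N⁻¹ else 0 : ℝ) * ⟪y i - xbar, v⟫ = 0 := by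
    have e0 : ∀ i : Fin n, (if i ∈ Istar then N⁻¹ else 0 : ℝ) * ⟪y i - xbar, v⟫
        = (if i ∈ Istar then N⁻¹ * ⟪y i - xbar, v⟫ else 0) := by
      intro i; split <;> simp
    rw [Finset.sum_congr rfl (fun i _ => e0 i), Finset.sum_ite_mem, Finset.univ_inter,
      ← Finset.mul_sum]
    have : ∑ i ∈ Istar, ⟪y i - xbar, v⟫ = 0 := by
      rw [← sum_inner, hIsum0, inner_zero_left]
    rw [this, mul_zero]
  -- scalar shifted quantities
  have hsXi : ∀ i, ⟪y i - xbar, v⟫ - ρ = ⟪y i - xplus, v⟫ := by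
    intro i
    have hvec : (y i - xbar) - (xplus - xbar) = y i - xplus := by abel
    rw [← hinner_z, ← inner_sub_left, hvec]
  have hWxplus : ∑ i, w i • y i = W • xplus := by
    rw [hxplus, smul_smul, mul_inv_cancel₀ hW0.ne', one_smul]
  have hwX0 : ∑ i, w i * (⟪y i - xbar, v⟫ - ρ) = 0 := by
    have e0 : ∑ i, w i • (y i - xplus) = 0 := by
      simp only [smul_sub]
      rw [Finset.sum_sub_distrib, hWxplus, ← Finset.sum_smul, ← hWdef, sub_self]
    calc ∑ i, w i * (⟪y i - xbar, v⟫ - ρ) = ∑ i, ⟪w i • (y i - xplus), v⟫ := by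
          refine Finset.sum_congr rfl (fun i _ => ?_)
          rw [hsXi i, real_inner_smul_left]
    _ = ⟪∑ i, w i • (y i - xplus), v⟫ := (sum_inner _ _ _).symm
    _ = 0 := by rw [e0, inner_zero_left]
  -- variance comparison: recentering decreases the quadratic form
  have hwXu : ∑ i, w i * (⟪y i - xbar, v⟫ - ρ)^2 ≤ ∑ i, w i * (⟪y i - x, v⟫)^2 := by
    have hu : ∀ i, ⟪y i - x, v⟫ = (⟪y i - xbar, v⟫ - ρ) + ⟪xplus - x, v⟫ := by
      intro i
      have hvec : (y i - xplus) + (xplus - x) = y i - x := by abel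
      rw [hsXi i, ← inner_add_left, hvec]
    have expand : ∀ i : Fin n, w i * (⟪y i - x, v⟫)^2
        = w i * (⟪y i - xbar, v⟫ - ρ)^2
          + 2 * ⟪xplus - x, v⟫ * (w i * (⟪y i - xbar, v⟫ - ρ))
          + (⟪xplus - x, v⟫)^2 * w i := by
      intro i; rw [hu i]; ring
    have e1 : ∑ i, w i * (⟪y i - x, v⟫)^2
        = ∑ i, w i * (⟪y i - xbar, v⟫ - ρ)^2
          + 2 * ⟪xplus - x, v⟫ * (∑ i, w i * (⟪y i - xbar, v⟫ - ρ))
          + (⟪xplus - x, v⟫)^2 * W := by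
      rw [Finset.sum_congr rfl (fun i _ => expand i), Finset.sum_add_distrib,
        Finset.sum_add_distrib, ← Finset.mul_sum, ← Finset.mul_sum, hWdef]
    rw [e1, hwX0, mul_zero, add_zero]
    have hc2 : 0 ≤ (⟪xplus - x, v⟫ : ℝ)^2 * W := mul_nonneg (sq_nonneg _) hW0.le
    linarith only [hc2]
  -- covariance bounds
  have hAn : ∑ i, w i * (⟪y i - xbar, v⟫ - ρ)^2 ≤ (c₁^2 + c₂^2) * σ^2 * n := by
    refine hwXu.trans (le_trans ?_ hcovh)
    refine le_trans (Finset.sum_le_sum fun i _ =>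
      mul_le_mul_of_nonneg_right (hwh i) (sq_nonneg _)) ?_
    exact le_lamMax (fun i => 1 - h i)
      (fun i => by show (0:ℝ) ≤ 1 - h i; linarith only [hh1 i]) y x v hvnorm
  have hBn : ∑ i, (if i ∈ Istar then (1:ℝ) else 0) * (⟪y i - xbar, v⟫)^2
      ≤ c₁^2 * σ^2 * n := by
    refine le_trans ?_ hcovI
    exact le_lamMax (fun i => if i ∈ Istar then (1:ℝ) else 0)
      (fun i => by show (0:ℝ) ≤ if i ∈ Istar then (1:ℝ) else 0; split <;> norm_num)
      y xbar v hvnorm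
  -- bound the normalized quadratic forms
  have hA_eq : ∑ i, (w i / W) * (⟪y i - xbar, v⟫ - ρ)^2
      = (∑ i, w i * (⟪y i - xbar, v⟫ - ρ)^2) / W := by
    calc ∑ i, (w i / W) * (⟪y i - xbar, v⟫ - ρ)^2
        = ∑ i, (w i * (⟪y i - xbar, v⟫ - ρ)^2) / W :=
          Finset.sum_congr rfl (fun i _ => div_mul_eq_mul_div _ _ _)
    _ = (∑ i, w i * (⟪y i - xbar, v⟫ - ρ)^2) / W := (Finset.sum_div _ _ _).symm
  have hA_le : ∑ i, (w i / W) * (⟪y i - xbar, v⟫ - ρ)^2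
      ≤ (c₁^2 + c₂^2) * σ^2 / (1 - ε' / τ) := by
    rw [hA_eq]
    calc (∑ i, w i * (⟪y i - xbar, v⟫ - ρ)^2) / W
        ≤ ((c₁^2 + c₂^2) * σ^2 * n) / ((1 - ε' / τ) * n) := by
          apply div_le_div₀ (by positivity) hAn (by positivity) hWlb
    _ = (c₁^2 + c₂^2) * σ^2 / (1 - ε' / τ) := mul_div_mul_right _ _ hn0.ne'
  have hB_eq : ∑ i, (if i ∈ Istar then N⁻¹ else 0 : ℝ) * (⟪y i - xbar, v⟫)^2
      = (∑ i, (if i ∈ Istar then (1:ℝ) else 0) * (⟪y i - xbar, v⟫)^2) / N := by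
    calc ∑ i, (if i ∈ Istar then N⁻¹ else 0 : ℝ) * (⟪y i - xbar, v⟫)^2
        = ∑ i, ((if i ∈ Istar then (1:ℝ) else 0) * (⟪y i - xbar, v⟫)^2) / N := by
          refine Finset.sum_congr rfl (fun i _ => ?_)
          split
          · rw [one_mul]; exact inv_mul_eq_div _ _
          · simp
    _ = _ := (Finset.sum_div _ _ _).symm
  have hB_le : ∑ i, (if i ∈ Istar then N⁻¹ else 0 : ℝ) * (⟪y i - xbar, v⟫)^2
      ≤ c₁^2 * σ^2 / (1 - ε') := by
    rw [hB_eq]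
    calc (∑ i, (if i ∈ Istar then (1:ℝ) else 0) * (⟪y i - xbar, v⟫)^2) / N
        ≤ (c₁^2 * σ^2 * n) / ((1 - ε') * n) := by
          apply div_le_div₀ (by positivity) hBn (by positivity) hNlb
    _ = c₁^2 * σ^2 / (1 - ε') := mul_div_mul_right _ _ hn0.ne'
  -- bound on the total-variation defect δ
  obtain ⟨M, hM⟩ : ∃ m : ℝ, m = max W N := ⟨_, rfl⟩
  have hMW : W ≤ M := hM ▸ le_max_left _ _
  have hMN : N ≤ M := hM ▸ le_max_right _ _
  have hM0 : 0 < M := lt_of_lt_of_le hW0 hMW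
  have hmin_ge : ∀ i ∈ Istar, w i / M ≤ min (w i / W) (if i ∈ Istar then N⁻¹ else 0 : ℝ) := by
    intro i hi
    simp only [hi, if_true]
    refine le_min ?_ ?_
    · exact div_le_div_of_nonneg_left (hw0 i) hW0 hMW
    · calc w i / M ≤ 1 / M := by gcongr; exact hw1 i
      _ ≤ 1 / N := one_div_le_one_div_of_le hN0 hMN
      _ = N⁻¹ := one_div _
  have hsum_min_ge : (∑ i ∈ Istar, w i) / M
      ≤ ∑ i, min (w i / W) (if i ∈ Istar then N⁻¹ else 0 : ℝ) := by
    rw [Finset.sum_div]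
    refine le_trans (Finset.sum_le_sum hmin_ge)
      (Finset.sum_le_sum_of_subset_of_nonneg (Finset.subset_univ _) ?_)
    intro i _ _
    exact le_min (ha0 i) (hb0 i)
  have hSW : W - (ε' / τ) * n ≤ ∑ i ∈ Istar, w i := by
    have hsplit : ∑ i ∈ Istar, w i + ∑ i ∈ Istarᶜ, w i = W := by
      rw [Finset.sum_add_sum_compl, hWdef]
    have hcompl : ∑ i ∈ Istarᶜ, w i ≤ (n:ℝ) - N := by
      calc ∑ i ∈ Istarᶜ, w i ≤ ∑ _i ∈ Istarᶜ, (1:ℝ) := Finset.sum_le_sum (fun i _ => hw1 i)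
      _ = (Istarᶜ.card : ℝ) := by rw [Finset.sum_const, nsmul_eq_mul, mul_one]
      _ = (n:ℝ) - N := by
          rw [Finset.card_compl, hNdef]
          rw [Nat.cast_sub (by simpa using Finset.card_le_univ Istar)]
          simp
    have h5 : (n:ℝ) - N ≤ ε' * n := by linarith only [hNlb]
    have h6 : ε' * n ≤ (ε' / τ) * n := mul_le_mul_of_nonneg_right heε hn0.le
    linarith only [hsplit, hcompl, h5, h6]
  have hSN : N - (ε' / τ) * n ≤ ∑ i ∈ Istar, w i := by
    have e1 : ∑ i ∈ Istar, ((1:ℝ) - w i) = N - ∑ i ∈ Istar, w i := by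
      rw [Finset.sum_sub_distrib, Finset.sum_const, nsmul_eq_mul, mul_one, hNdef]
    have e2 : ∑ i ∈ Istar, ((1:ℝ) - w i) ≤ ∑ i, ((1:ℝ) - w i) :=
      Finset.sum_le_sum_of_subset_of_nonneg (Finset.subset_univ _)
        (fun i _ _ => by linarith [hw1 i])
    have e3 : ∑ i, ((1:ℝ) - w i) = n - W := by
      rw [Finset.sum_sub_distrib, ← hWdef]; simp
    have e4 : (n:ℝ) - W ≤ (ε' / τ) * n := by linarith only [hWlb]
    linarith only [e1 ▸ (e2.trans_eq e3), e4]
  have hMS : M - (ε' / τ) * n ≤ ∑ i ∈ Istar, w i := by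
    rw [sub_le_iff_le_add, hM]
    exact max_le (by linarith only [hSW]) (by linarith only [hSN])
  obtain ⟨δ, hδdef⟩ : ∃ dd : ℝ,
      dd = 1 - ∑ i, min (w i / W) (if i ∈ Istar then N⁻¹ else 0 : ℝ) := ⟨_, rfl⟩
  have hδle : δ ≤ (ε' / τ) / (1 - ε') := by
    have s1 : δ ≤ 1 - (∑ i ∈ Istar, w i) / M := by
      rw [hδdef]; linarith only [hsum_min_ge]
    have s2 : 1 - (∑ i ∈ Istar, w i) / M = (M - ∑ i ∈ Istar, w i) / M := by
      field_simp
    have s3 : (M - ∑ i ∈ Istar, w i) / M ≤ ((ε' / τ) * n) / M := by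
      gcongr
      linarith only [hMS]
    have s4 : ((ε' / τ) * n) / M ≤ ((ε' / τ) * n) / N :=
      div_le_div_of_nonneg_left (by positivity) hN0 hMN
    have s5 : ((ε' / τ) * n) / N ≤ ((ε' / τ) * n) / ((1 - ε') * n) :=
      div_le_div_of_nonneg_left (by positivity) (by positivity) hNlb
    have s6 : ((ε' / τ) * n) / ((1 - ε') * n) = (ε' / τ) / (1 - ε') :=
      mul_div_mul_right _ _ hn0.ne'
    linarith only [s1.trans (s2 ▸ (s3.trans (s4.trans (s5.trans_eq s6))))]
  have hquot : (ε' / τ) / (1 - ε') < 1 := by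
    rw [div_lt_one h1ε]; linarith only [hlt]
  have hk0 : 0 < 1 - δ := by linarith only [hδle, hquot]
  have hδk : δ / (1 - δ) ≤ (ε' / τ) / (1 - ε' - ε' / τ) := by
    have hk_ge : (1 - ε' - ε' / τ) / (1 - ε') ≤ 1 - δ := by
      have : (1 - ε' - ε' / τ) / (1 - ε') = 1 - (ε' / τ) / (1 - ε') := by
        field_simp
      linarith only [this, hδle]
    have hd := div_le_div₀ (div_nonneg he0.le h1ε.le) hδle (by positivity) hk_ge
    have : ((ε' / τ) / (1 - ε')) / ((1 - ε' - ε' / τ) / (1 - ε'))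
        = (ε' / τ) / (1 - ε' - ε' / τ) := by
      have hn1 : (1 - ε') ≠ 0 := h1ε.ne'
      have hn2 : (1 - ε' - ε' / τ) ≠ 0 := hD1.ne'
      have hn3 : τ ≠ 0 := hτ0.ne'
      field_simp
      try ring
    linarith only [hd.trans_eq this]
  -- apply the core scalar lemma
  have key := scalar_core (fun i => w i / W) (fun i => if i ∈ Istar then N⁻¹ else 0)
    (fun i => ⟪y i - xbar, v⟫) ρ δ (1 - δ)
    (∑ i, (w i / W) * (⟪y i - xbar, v⟫ - ρ)^2)
    (∑ i, (if i ∈ Istar then N⁻¹ else 0 : ℝ) * (⟪y i - xbar, v⟫)^2)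
    ha0 hb0 hsa hsb has hbs hδdef rfl hk0 rfl rfl
  -- conclude
  have hA0' : 0 ≤ ∑ i, (w i / W) * (⟪y i - xbar, v⟫ - ρ)^2 :=
    Finset.sum_nonneg (fun i _ => mul_nonneg (ha0 i) (sq_nonneg _))
  have hB0' : 0 ≤ ∑ i, (if i ∈ Istar then N⁻¹ else 0 : ℝ) * (⟪y i - xbar, v⟫)^2 :=
    Finset.sum_nonneg (fun i _ => mul_nonneg (hb0 i) (sq_nonneg _))
  have hAcap0 : 0 ≤ (c₁^2 + c₂^2) * σ^2 / (1 - ε' / τ) := by positivity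
  have hBcap0 : 0 ≤ c₁^2 * σ^2 / (1 - ε') := by positivity
  have hfa : δ * (∑ i, (w i / W) * (⟪y i - xbar, v⟫ - ρ)^2) / (1 - δ)
      ≤ ((c₁^2 + c₂^2) * σ^2 / (1 - ε' / τ)) * ((ε' / τ) / (1 - ε' - ε' / τ)) := by
    calc δ * (∑ i, (w i / W) * (⟪y i - xbar, v⟫ - ρ)^2) / (1 - δ)
        = (δ / (1 - δ)) * (∑ i, (w i / W) * (⟪y i - xbar, v⟫ - ρ)^2) := by ring
    _ ≤ ((ε' / τ) / (1 - ε' - ε' / τ)) * ((c₁^2 + c₂^2) * σ^2 / (1 - ε' / τ)) :=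
        mul_le_mul hδk hA_le hA0' hD0
    _ = _ := mul_comm _ _
  have hfb : δ * (∑ i, (if i ∈ Istar then N⁻¹ else 0 : ℝ) * (⟪y i - xbar, v⟫)^2) / (1 - δ)
      ≤ (c₁^2 * σ^2 / (1 - ε')) * ((ε' / τ) / (1 - ε' - ε' / τ)) := by
    calc δ * (∑ i, (if i ∈ Istar then N⁻¹ else 0 : ℝ) * (⟪y i - xbar, v⟫)^2) / (1 - δ)
        = (δ / (1 - δ)) * (∑ i, (if i ∈ Istar then N⁻¹ else 0 : ℝ) * (⟪y i - xbar, v⟫)^2) := by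
          ring
    _ ≤ ((ε' / τ) / (1 - ε' - ε' / τ)) * (c₁^2 * σ^2 / (1 - ε')) :=
        mul_le_mul hδk hB_le hB0' hD0
    _ = _ := mul_comm _ _
  calc ρ ≤ _ := key
  _ ≤ Real.sqrt (((c₁^2 + c₂^2) * σ^2 / (1 - ε' / τ)) * ((ε' / τ) / (1 - ε' - ε' / τ)))
      + Real.sqrt ((c₁^2 * σ^2 / (1 - ε')) * ((ε' / τ) / (1 - ε' - ε' / τ))) :=
      add_le_add (Real.sqrt_le_sqrt hfa) (Real.sqrt_le_sqrt hfb)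
  _ = (Real.sqrt ((c₁^2 + c₂^2) * σ^2 / (1 - ε' / τ)) +
        Real.sqrt (c₁^2 * σ^2 / (1 - ε'))) *
        Real.sqrt ((ε' / τ) / (1 - ε' - ε' / τ)) := by
      rw [Real.sqrt_mul hAcap0, Real.sqrt_mul hBcap0]; ring
end

section
/- Let P be a distribution on ℝ^d with mean μ and covariance matrix Σ ⪯ σ²I, and let ε ≤ 1/3. Given an ε-corrupted sample y₁,…,yₙ from P, the coordinate-wise median x̂ of y₁,…,yₙ (i.e., for each coordinate k, x̂_k is a median of (y₁)_k,…,(yₙ)_k) satisfies ‖x̂ − μ‖₂ ≤ 3σ√d with probability at least 1 − d·exp(−n/90). -/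
open MeasureTheory ProbabilityTheory Real
open scoped BigOperators ENNReal RealInnerProductSpace Classical

/-!
For a fixed coordinate `k`, Chebyshev gives `P(|Ỹᵢₖ - μₖ| > 3σ) ≤ 1/9`, so by a Chernoff bound
for independent indicators, fewer than `n/6` of the clean points are `3σ`-far from `μₖ` except
with probability `exp(-n/90)`. On that event at most `n/3 + n/6 < n/2` of the observed points are
corrupted or far, while a median has at least `n/2` points on each side; hence
`|x̂ₖ - μₖ| ≤ 3σ`. A union bound over the `d` coordinates and `‖v‖ ≤ √d · maxₖ |vₖ|` finish.
-/

open Finset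

theorem exp_two_fifths_le : exp (2 / 5) ≤ 3 / 2 := by
  have h : exp (2 / 5) ^ 5 ≤ (3 / 2) ^ 5 :=
    calc exp (2 / 5) ^ 5 = exp 1 ^ 2 := by rw [← exp_nat_mul, ← exp_nat_mul]; norm_num
      _ ≤ 2.7182818286 ^ 2 := by gcongr; exact exp_one_lt_d9.le
      _ ≤ (3 / 2) ^ 5 := by norm_num
  exact (pow_le_pow_iff_left₀ (exp_pos _).le (by norm_num) (by norm_num)).1 h

section Probability

variable {Ω ι : Type*} [MeasurableSpace Ω] {P : Measure Ω}

theorem measureReal_mul_lt_abs_le [IsFiniteMeasure P] {X : Ω → ℝ} {σ c : ℝ} (hσ : 0 ≤ σ)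
    (hc : 0 < c) (hint : Integrable (fun ω ↦ X ω ^ 2) P) (hvar : ∫ ω, X ω ^ 2 ∂P ≤ σ ^ 2) :
    P.real {ω | c * σ < |X ω|} ≤ 1 / c ^ 2 := by
  rcases hσ.eq_or_lt with rfl | hσ
  · have hX : ∀ᵐ ω ∂P, X ω ^ 2 = 0 :=
      (integral_eq_zero_iff_of_nonneg (fun ω ↦ sq_nonneg _) hint).1
        (le_antisymm (by simpa using hvar) (integral_nonneg fun ω ↦ sq_nonneg _))
    have hnull : P {ω | c * 0 < |X ω|} = 0 :=
      measure_mono_null (fun ω hω ↦ by simp_all) (ae_iff.1 hX)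
    rw [measureReal_def, hnull]
    positivity
  · have hsub : {ω | c * σ < |X ω|} ⊆ {ω | (c * σ) ^ 2 ≤ X ω ^ 2} := fun ω hω ↦ by
      simpa [sq_abs] using pow_le_pow_left₀ (by positivity) (le_of_lt (a := c * σ) hω) 2
    have hmarkov := mul_meas_ge_le_integral_of_nonneg (ae_of_all _ fun ω ↦ sq_nonneg (X ω)) hint
      ((c * σ) ^ 2)
    rw [le_div_iff₀ (by positivity)]
    refine le_of_mul_le_mul_right ?_ (pow_pos hσ 2)
    calc P.real {ω | c * σ < |X ω|} * c ^ 2 * σ ^ 2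
        = (c * σ) ^ 2 * P.real {ω | c * σ < |X ω|} := by ring
      _ ≤ (c * σ) ^ 2 * P.real {ω | (c * σ) ^ 2 ≤ X ω ^ 2} :=
          mul_le_mul_of_nonneg_left (measureReal_mono hsub) (by positivity)
      _ ≤ 1 * σ ^ 2 := by linarith

variable [IsProbabilityMeasure P]

theorem mgf_indicator_one {A : Set Ω} (hA : MeasurableSet A) (t : ℝ) :
    mgf (A.indicator 1) P t = 1 + P.real A * (exp t - 1) := by
  have h : (fun ω ↦ exp (t * A.indicator 1 ω)) =
      fun ω ↦ 1 + A.indicator (fun _ ↦ exp t - 1) ω := by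
    ext ω; by_cases hω : ω ∈ A <;> simp [hω]
  rw [mgf, h, integral_add (integrable_const 1) ((integrable_const _).indicator hA),
    integral_indicator_const _ hA]
  simp [smul_eq_mul]

variable [Fintype ι]

theorem measureReal_le_card_filter_mem_le {A : ι → Set Ω} (hA : ∀ i, MeasurableSet (A i))
    (hindep : iIndepFun (fun i ↦ (A i).indicator (1 : Ω → ℝ)) P) {p : ℝ}
    (hp : ∀ i, P.real (A i) ≤ p) {t : ℝ} (ht : 0 ≤ t) (a : ℝ) :
    P.real {ω | a ≤ #{i | ω ∈ A i}} ≤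
      exp (-t * a) * (1 + p * (exp t - 1)) ^ Fintype.card ι := by
  set S := ∑ i, (A i).indicator (1 : Ω → ℝ)
  have hS : ∀ ω, S ω = #{i | ω ∈ A i} := fun ω ↦ by
    simp [S, Finset.sum_apply, Set.indicator_apply]
  have hmeas : ∀ i, Measurable ((A i).indicator (1 : Ω → ℝ)) :=
    fun i ↦ measurable_const.indicator (hA i)
  have hint : Integrable (fun ω ↦ exp (t * S ω)) P := by
    refine Integrable.of_bound (C := exp (t * Fintype.card ι)) (by fun_prop)
      (ae_of_all _ fun ω ↦ ?_)
    rw [norm_of_nonneg (exp_pos _).le, hS]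
    gcongr
    exact_mod_cast card_filter_le _ _
  have hmgf : mgf S P t ≤ (1 + p * (exp t - 1)) ^ Fintype.card ι := by
    rw [hindep.mgf_sum hmeas, ← Finset.card_univ, ← prod_const]
    refine prod_le_prod (fun i _ ↦ mgf_nonneg) fun i _ ↦ ?_
    rw [mgf_indicator_one (hA i)]
    gcongr
    · linarith [add_one_le_exp t]
    · exact hp i
  simp_rw [← hS]
  exact (measure_ge_le_exp_mul_mgf a ht hint).trans (by gcongr)

theorem measure_card_filter_three_mul_lt_abs_sub_le {X : ι → Ω → ℝ}
    (hmeas : ∀ i, Measurable (X i)) (hindep : iIndepFun X P) {c σ : ℝ} (hσ : 0 ≤ σ)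
    (hint : ∀ i, Integrable (fun ω ↦ (X i ω - c) ^ 2) P)
    (hvar : ∀ i, ∫ ω, (X i ω - c) ^ 2 ∂P ≤ σ ^ 2) :
    P {ω | (Fintype.card ι : ℝ) / 6 ≤ #{i | 3 * σ < |X i ω - c|}} ≤
      ENNReal.ofReal (exp (-(Fintype.card ι : ℝ) / 90)) := by
  set A : ι → Set Ω := fun i ↦ X i ⁻¹' {x | 3 * σ < |x - c|}
  have hB : MeasurableSet {x : ℝ | 3 * σ < |x - c|} :=
    measurableSet_lt (by fun_prop) (by fun_prop)
  have hindA : iIndepFun (fun i ↦ (A i).indicator (1 : Ω → ℝ)) P :=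
    hindep.comp (fun _ ↦ {x : ℝ | 3 * σ < |x - c|}.indicator 1)
      fun _ ↦ measurable_const.indicator hB
  have hp : ∀ i, P.real (A i) ≤ 1 / 9 := fun i ↦
    (measureReal_mul_lt_abs_le hσ three_pos (hint i) (hvar i)).trans_eq (by norm_num)
  -- `t = 2/5` is close to the optimal parameter `log (3/2)`, and with it the exponent
  -- `-t/6 + (exp t - 1)/9 ≤ -1/90` is exactly `exp (2/5) ≤ 3/2`.
  have h := measureReal_le_card_filter_mem_le (fun i ↦ hB.preimage (hmeas i)) hindA hp
    (by norm_num : (0 : ℝ) ≤ 2 / 5) (Fintype.card ι / 6)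
  rw [← ofReal_measureReal]
  refine ENNReal.ofReal_le_ofReal (h.trans ?_)
  have hbase : 1 + 1 / 9 * (exp (2 / 5) - 1) ≤ exp (1 / 18) := by
    linarith [exp_two_fifths_le, add_one_le_exp (1 / 18 : ℝ)]
  calc exp (-(2 / 5) * (Fintype.card ι / 6)) * (1 + 1 / 9 * (exp (2 / 5) - 1)) ^ Fintype.card ι
      ≤ exp (-(2 / 5) * (Fintype.card ι / 6)) * exp (1 / 18) ^ Fintype.card ι := by
        gcongr
        linarith [exp_pos (2 / 5)]
    _ = exp (-(Fintype.card ι : ℝ) / 90) := by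
        rw [← exp_nat_mul, ← exp_add]; ring_nf

theorem ofReal_one_sub_card_mul_le_measure {s : Set Ω} {E : ι → Set Ω}
    (hs : ∀ᵐ ω ∂P, (∀ i, ω ∉ E i) → ω ∈ s) {q : ℝ} (hq : 0 ≤ q)
    (hE : ∀ i, P (E i) ≤ ENNReal.ofReal q) :
    ENNReal.ofReal (1 - Fintype.card ι * q) ≤ P s := by
  have hcompl : P sᶜ ≤ ENNReal.ofReal (Fintype.card ι * q) :=
    calc P sᶜ ≤ P (⋃ i, E i) := measure_mono_ae <| hs.mono fun ω h hωs ↦ by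
          by_contra hU
          exact hωs (h fun i hi ↦ hU (Set.mem_iUnion.2 ⟨i, hi⟩))
      _ ≤ ∑ i, P (E i) := measure_iUnion_fintype_le P E
      _ ≤ ∑ _i : ι, ENNReal.ofReal q := sum_le_sum fun i _ ↦ hE i
      _ = ENNReal.ofReal (Fintype.card ι * q) := by simp [ENNReal.ofReal_mul]
  rw [ENNReal.ofReal_sub _ (by positivity), ENNReal.ofReal_one, tsub_le_iff_right]
  calc (1 : ℝ≥0∞) = P Set.univ := measure_univ.symm
    _ ≤ P s + P sᶜ := measure_univ_le_add_compl s
    _ ≤ P s + ENNReal.ofReal (Fintype.card ι * q) := by gcongr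

end Probability

section Median

variable {ι : Type*} [Fintype ι]

theorem card_filter_le_card_add_card_filter {p q : ι → Prop} [DecidablePred p]
    [DecidablePred q] (S : Finset ι) (h : ∀ i ∉ S, p i → q i) :
    #{i | p i} ≤ #S + #{i | q i} := by
  refine (card_le_card fun i hi ↦ ?_).trans (card_union_le S _)
  by_cases hS : i ∈ S <;> simp_all

theorem abs_sub_le_of_le_card_filter {y z : ι → ℝ} {m c r : ℝ} (S : Finset ι)
    (hS : ∀ i ∉ S, y i = z i) (hle : (Fintype.card ι : ℝ) / 2 ≤ #{i | y i ≤ m})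
    (hge : (Fintype.card ι : ℝ) / 2 ≤ #{i | m ≤ y i})
    (hbad : (#S + #{i | r < |z i - c|} : ℝ) < Fintype.card ι / 2) : |m - c| ≤ r := by
  refine abs_sub_le_iff.2 ⟨?_, ?_⟩ <;> by_contra! hfar
  · have := card_filter_le_card_add_card_filter (p := fun i ↦ m ≤ y i)
      (q := fun i ↦ r < |z i - c|) S fun i hi hmy ↦ lt_abs.2 (Or.inl (by linarith [hS i hi]))
    have : (#{i | m ≤ y i} : ℝ) ≤ #S + #{i | r < |z i - c|} := by exact_mod_cast this
    linarith
  · have := card_filter_le_card_add_card_filter (p := fun i ↦ y i ≤ m)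
      (q := fun i ↦ r < |z i - c|) S fun i hi hym ↦ lt_abs.2 (Or.inr (by linarith [hS i hi]))
    have : (#{i | y i ≤ m} : ℝ) ≤ #S + #{i | r < |z i - c|} := by exact_mod_cast this
    linarith

end Median

theorem EuclideanSpace.norm_le_mul_sqrt_card {ι : Type*} [Fintype ι] {x : EuclideanSpace ℝ ι}
    {r : ℝ} (hr : 0 ≤ r) (h : ∀ i, |x i| ≤ r) : ‖x‖ ≤ r * √(Fintype.card ι) := by
  calc ‖x‖ = √(∑ i, ‖x i‖ ^ 2) := EuclideanSpace.norm_eq x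
    _ ≤ √(∑ _i : ι, r ^ 2) := by gcongr with i; exact h i
    _ = r * √(Fintype.card ι) := by simp [hr, mul_comm]

theorem coordinatewise_median_bound_general {Ω : Type} [MeasureSpace Ω]
    [IsProbabilityMeasure (ℙ : Measure Ω)]
    {n d : ℕ} (Ytilde Y : Fin n → Ω → EuclideanSpace ℝ (Fin d))
    (hmeasYt : ∀ i, Measurable (Ytilde i))
    (hindep : iIndepFun Ytilde ℙ)
    (μ : EuclideanSpace ℝ (Fin d)) (σ : ℝ) (hσ : 0 ≤ σ)
    (hcovint : ∀ i (v : EuclideanSpace ℝ (Fin d)),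
      Integrable (fun ω => (⟪Ytilde i ω - μ, v⟫)^2) ℙ)
    (hcov : ∀ i, ∀ v : EuclideanSpace ℝ (Fin d), ‖v‖ = 1 →
      ∫ ω, (⟪Ytilde i ω - μ, v⟫)^2 ≤ σ^2)
    (ε : ℝ) (hε : ε ≤ 1/3)
    (hcorrupt : ∀ᵐ ω ∂ℙ,
      ((Finset.univ.filter (fun i => Y i ω ≠ Ytilde i ω)).card : ℝ) ≤ ε * n)
    (xhat : Ω → EuclideanSpace ℝ (Fin d))
    (hmedian : ∀ ω, ∀ k : Fin d,
      (n : ℝ)/2 ≤ ((Finset.univ.filter (fun i => Y i ω k ≤ xhat ω k)).card : ℝ) ∧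
      (n : ℝ)/2 ≤ ((Finset.univ.filter (fun i => xhat ω k ≤ Y i ω k)).card : ℝ)) :
    ENNReal.ofReal (1 - d * Real.exp (-(n:ℝ)/90)) ≤
      ℙ {ω | ‖xhat ω - μ‖ ≤ 3 * σ * Real.sqrt d} := by
  have hcoord : ∀ i k, (fun ω ↦ ⟪Ytilde i ω - μ, EuclideanSpace.single k 1⟫ ^ 2) =
      fun ω ↦ (Ytilde i ω k - μ k) ^ 2 := fun i k ↦ by
    ext ω; simp [EuclideanSpace.inner_single_right]
  have htail : ∀ k, ℙ {ω | (n : ℝ) / 6 ≤ #{i | 3 * σ < |Ytilde i ω k - μ k|}} ≤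
      ENNReal.ofReal (exp (-(n : ℝ) / 90)) := fun k ↦ by
    have hproj : Measurable fun x : EuclideanSpace ℝ (Fin d) ↦ x k := by fun_prop
    simpa using measure_card_filter_three_mul_lt_abs_sub_le (X := fun i ω ↦ Ytilde i ω k)
      (fun i ↦ hproj.comp (hmeasYt i)) (hindep.comp (fun _ x ↦ x k) fun _ ↦ hproj) hσ
      (fun i ↦ hcoord i k ▸ hcovint i _) (fun i ↦ hcoord i k ▸ hcov i _ (by simp))
  have hgood : ∀ᵐ ω ∂ℙ,
      (∀ k, ω ∉ {ω | (n : ℝ) / 6 ≤ #{i | 3 * σ < |Ytilde i ω k - μ k|}}) →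
        ω ∈ {ω | ‖xhat ω - μ‖ ≤ 3 * σ * √d} := hcorrupt.mono fun ω hω hfar ↦ by
    refine (EuclideanSpace.norm_le_mul_sqrt_card (r := 3 * σ) (by positivity) fun k ↦ ?_).trans_eq
      (by simp)
    rw [PiLp.sub_apply]
    refine abs_sub_le_of_le_card_filter (y := fun i ↦ Y i ω k) (z := fun i ↦ Ytilde i ω k)
      {i | Y i ω ≠ Ytilde i ω} (fun i hi ↦ by rw [show Y i ω = Ytilde i ω by simpa using hi])
      (by simpa using (hmedian ω k).1) (by simpa using (hmedian ω k).2) ?_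
    simp only [Fintype.card_fin]
    linarith [not_le.1 (Set.notMem_ofPred_iff.1 (hfar k)), mul_le_mul_of_nonneg_right hε n.cast_nonneg]
  simpa using ofReal_one_sub_card_mul_le_measure hgood (exp_pos _).le htail

/-- the coordinate-wise median of an `ε`-corrupted sample (`ε ≤ 1/3`)
from a distribution with mean `μ` and covariance `⪯ σ²I` is within `3σ√d` of `μ`
with probability at least `1 − d·exp(−n/90)`. -/
theorem coordinatewise_median_bound {Ω : Type} [MeasureSpace Ω]
    [IsProbabilityMeasure (ℙ : Measure Ω)]
    {n d : ℕ} (Ytilde Y : Fin n → Ω → EuclideanSpace ℝ (Fin d))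
    (hmeasYt : ∀ i, Measurable (Ytilde i)) (hmeasY : ∀ i, Measurable (Y i))
    (hindep : iIndepFun Ytilde ℙ)
    (hid : ∀ i j, IdentDistrib (Ytilde i) (Ytilde j) ℙ ℙ)
    (μ : EuclideanSpace ℝ (Fin d)) (σ : ℝ) (hσ : 0 ≤ σ)
    (hint : ∀ i, Integrable (Ytilde i) ℙ)
    (hmean : ∀ i, ∫ ω, Ytilde i ω = μ)
    (hcovint : ∀ i (v : EuclideanSpace ℝ (Fin d)),
      Integrable (fun ω => (⟪Ytilde i ω - μ, v⟫)^2) ℙ)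
    (hcov : ∀ i, ∀ v : EuclideanSpace ℝ (Fin d), ‖v‖ = 1 →
      ∫ ω, (⟪Ytilde i ω - μ, v⟫)^2 ≤ σ^2)
    (ε : ℝ) (hε0 : 0 ≤ ε) (hε : ε ≤ 1/3)
    (hcorrupt : ∀ᵐ ω ∂ℙ,
      ((Finset.univ.filter (fun i => Y i ω ≠ Ytilde i ω)).card : ℝ) ≤ ε * n)
    (xhat : Ω → EuclideanSpace ℝ (Fin d))
    (hmedian : ∀ ω, ∀ k : Fin d,
      (n : ℝ)/2 ≤ ((Finset.univ.filter (fun i => Y i ω k ≤ xhat ω k)).card : ℝ) ∧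
      (n : ℝ)/2 ≤ ((Finset.univ.filter (fun i => xhat ω k ≤ Y i ω k)).card : ℝ)) :
    ENNReal.ofReal (1 - d * Real.exp (-(n:ℝ)/90)) ≤
      ℙ {ω | ‖xhat ω - μ‖ ≤ 3 * σ * Real.sqrt d} :=
  coordinatewise_median_bound_general Ytilde Y hmeasYt hindep μ σ hσ hcovint hcov ε hε hcorrupt xhat
    hmedian
end

section
/- Fix y₁,…,yₙ ∈ ℝ^d, σ > 0 and c₁ > 0. Consider the relaxed feasible set F = {(h, x) : h ∈ [0,1]ⁿ, x ∈ ℝ^d, λmax(∑_{i=1}^{n}(1−hᵢ)(yᵢ−x)(yᵢ−x)ᵀ) ≤ c₁²σ²n} and the binary feasible set F₀ = {(h, x) ∈ F : h ∈ {0,1}ⁿ}. If (h̃, x̃) is a global minimizer of ‖h‖₀ over F, then the binary vector h' defined by h'ᵢ = 1 if h̃ᵢ ≠ 0 and h'ᵢ = 0 otherwise satisfies (h', x̃) ∈ F₀, ‖h'‖₀ = ‖h̃‖₀, and (h', x̃) is a global minimizer of ‖h‖₀ over F₀; consequently the minimum of ‖h‖₀ over F equals the minimum of ‖h‖₀ over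 F₀. -/
open MeasureTheory Real
open scoped BigOperators RealInnerProductSpace Classical

/-- `‖h‖₀`, the number of nonzero entries of `h`. -/
noncomputable def l0 {n : ℕ} (h : Fin n → ℝ) : ℕ :=
  (Finset.univ.filter (fun i => h i ≠ 0)).card

/-- The relaxed feasible set of the `ℓ₀` optimization problem. -/
noncomputable def feasible {n d : ℕ} (y : Fin n → EuclideanSpace ℝ (Fin d))
    (σ c₁ : ℝ) : Set ((Fin n → ℝ) × EuclideanSpace ℝ (Fin d)) :=
  {p | (∀ i, p.1 i ∈ Set.Icc (0:ℝ) 1) ∧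
    lamMax (fun i => 1 - p.1 i) y p.2 ≤ c₁^2 * σ^2 * n}


lemma lamMax_bdd {n d : ℕ} (w : Fin n → ℝ)
    (y : Fin n → EuclideanSpace ℝ (Fin d)) (x : EuclideanSpace ℝ (Fin d)) :
    BddAbove (Set.range fun v : Metric.sphere (0 : EuclideanSpace ℝ (Fin d)) 1 =>
      ∑ i, w i * (⟪y i - x, (v : EuclideanSpace ℝ (Fin d))⟫) ^ 2) := by
  refine ⟨∑ i, |w i| * ‖y i - x‖ ^ 2, ?_⟩
  rintro _ ⟨v, rfl⟩
  have hv : ‖(v : EuclideanSpace ℝ (Fin d))‖ = 1 := by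
    simpa using mem_sphere_zero_iff_norm.mp v.2
  refine Finset.sum_le_sum fun i _ => ?_
  have hcs : |⟪y i - x, (v : EuclideanSpace ℝ (Fin d))⟫| ≤ ‖y i - x‖ := by
    simpa [hv] using abs_real_inner_le_norm (y i - x) (v : EuclideanSpace ℝ (Fin d))
  have h2 : (⟪y i - x, (v : EuclideanSpace ℝ (Fin d))⟫) ^ 2 ≤ ‖y i - x‖ ^ 2 := by
    have := sq_le_sq' (neg_le_of_abs_le hcs) (le_of_abs_le hcs)
    simpa using this
  calc w i * (⟪y i - x, (v : EuclideanSpace ℝ (Fin d))⟫) ^ 2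
      ≤ |w i| * (⟪y i - x, (v : EuclideanSpace ℝ (Fin d))⟫) ^ 2 :=
        mul_le_mul_of_nonneg_right (le_abs_self _) (sq_nonneg _)
    _ ≤ |w i| * ‖y i - x‖ ^ 2 := mul_le_mul_of_nonneg_left h2 (abs_nonneg _)

lemma lamMax_mono {n d : ℕ} {w w' : Fin n → ℝ} (hle : ∀ i, w' i ≤ w i)
    (y : Fin n → EuclideanSpace ℝ (Fin d)) (x : EuclideanSpace ℝ (Fin d)) :
    lamMax w' y x ≤ lamMax w y x := by
  unfold lamMax
  cases isEmpty_or_nonempty (Metric.sphere (0 : EuclideanSpace ℝ (Fin d)) 1) with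
  | inl h => simp [iSup_of_empty']
  | inr h =>
    refine ciSup_mono (lamMax_bdd w y x) fun v => ?_
    exact Finset.sum_le_sum fun i _ =>
      mul_le_mul_of_nonneg_right (hle i) (sq_nonneg _)

/-- rounding a global `ℓ₀`-minimizer over the relaxed feasible set
to a binary vector gives a global minimizer over the binary feasible set, and the
two minima agree. -/
theorem binary_relaxation_l0 {n d : ℕ} (y : Fin n → EuclideanSpace ℝ (Fin d))
    (σ c₁ : ℝ) (hσ : 0 < σ) (hc₁ : 0 < c₁)
    (ht : Fin n → ℝ) (xt : EuclideanSpace ℝ (Fin d))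
    (hmem : (ht, xt) ∈ feasible y σ c₁)
    (hmin : ∀ q ∈ feasible y σ c₁, l0 ht ≤ l0 q.1) :
    (fun i => if ht i ≠ 0 then (1:ℝ) else 0, xt) ∈
        {p ∈ feasible y σ c₁ | ∀ i, p.1 i = 0 ∨ p.1 i = 1} ∧
    l0 (fun i => if ht i ≠ 0 then (1:ℝ) else 0) = l0 ht ∧
    (∀ q ∈ {p ∈ feasible y σ c₁ | ∀ i, p.1 i = 0 ∨ p.1 i = 1},
      l0 (fun i => if ht i ≠ 0 then (1:ℝ) else 0) ≤ l0 q.1) ∧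
    sInf ((fun p => l0 p.1) '' feasible y σ c₁) =
      sInf ((fun p => l0 p.1) '' {p ∈ feasible y σ c₁ | ∀ i, p.1 i = 0 ∨ p.1 i = 1}) := by
  
  set h' : Fin n → ℝ := fun i => if ht i ≠ 0 then (1:ℝ) else 0 with hh'
  have hIcc := hmem.1
  have hle : ∀ i, (1 : ℝ) - h' i ≤ 1 - ht i := by
    intro i
    by_cases hi : ht i = 0 <;> simp [h', hi, (hIcc i).2]
  have hfeas' : (h', xt) ∈ feasible y σ c₁ := by
    refine ⟨fun i => ?_, le_trans (lamMax_mono hle y xt) hmem.2⟩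
    by_cases hi : ht i = 0 <;> simp [h', hi]
  have hbin : ∀ i, h' i = 0 ∨ h' i = 1 := by
    intro i; by_cases hi : ht i = 0 <;> simp [h', hi]
  have hl0 : l0 h' = l0 ht := by
    unfold l0
    congr 1
    apply Finset.filter_congr
    intro i _
    by_cases hi : ht i = 0 <;> simp [h', hi]
  have hmemS : (h', xt) ∈ {p ∈ feasible y σ c₁ | ∀ i, p.1 i = 0 ∨ p.1 i = 1} :=
    ⟨hfeas', hbin⟩
  have hminS : ∀ q ∈ {p ∈ feasible y σ c₁ | ∀ i, p.1 i = 0 ∨ p.1 i = 1},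
      l0 h' ≤ l0 q.1 := by
    intro q hq
    rw [hl0]
    exact hmin q hq.1
  refine ⟨hmemS, hl0, hminS, ?_⟩
  have h1 : sInf ((fun p => l0 p.1) '' feasible y σ c₁) = l0 ht := by
    apply le_antisymm
    · exact Nat.sInf_le ⟨(ht, xt), hmem, rfl⟩
    · refine le_csInf ⟨l0 ht, ⟨(ht, xt), hmem, rfl⟩⟩ ?_
      rintro _ ⟨q, hq, rfl⟩
      exact hmin q hq
  have h2 : sInf ((fun p => l0 p.1) '' {p ∈ feasible y σ c₁ | ∀ i, p.1 i = 0 ∨ p.1 i = 1})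
      = l0 ht := by
    apply le_antisymm
    · rw [← hl0]; exact Nat.sInf_le ⟨(h', xt), hmemS, rfl⟩
    · refine le_csInf ⟨l0 h', ⟨(h', xt), hmemS, rfl⟩⟩ ?_
      rintro _ ⟨q, hq, rfl⟩
      exact hmin q hq.1
  rw [h1, h2]
end

section
/- Let y₁,…,yₙ ∈ ℝ^d and let w⁽¹⁾, w⁽²⁾ ∈ ℝⁿ be probability weight vectors (nonnegative entries summing to 1). For a probability weight vector w, let x_w = ∑_{i=1}^{n} wᵢ yᵢ and Σ_w = ∑_{i=1}^{n} wᵢ (yᵢ − x_w)(yᵢ − x_w)ᵀ. If the total variation distance TV(w⁽¹⁾, w⁽²⁾) = (1/2)∑_{i=1}^{n}|w⁽¹⁾ᵢ − w⁽²⁾ᵢ| satisfies TV(w⁽¹⁾, w⁽²⁾) ≤ ζ < 1, then ‖x_{w⁽¹⁾} − x_{w⁽²⁾}‖₂ ≤ ( √(λmax(Σ_{w⁽¹⁾})) + √(λmax(Σ_{w⁽²⁾})) )·√( ζ/(1 − ζ) ). -/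
/-!
Let `m = min w₁ w₂`, of mass `M = 1 - TV(w₁, w₂)`. For `w ∈ {w₁, w₂}` and a unit vector `v`,
`⟪∑ m y - M x_w, v⟫ = ∑ mᵢ ⟪yᵢ - x_w, v⟫`; as the `w`-average of `⟪yᵢ - x_w, v⟫` vanishes,
Cauchy–Schwarz on `m` and on `w - m` bounds its square by `M (1 - M) vᵀ Σ_w v`. Going from `x₁`
to `x₂` through `∑ m y / M` gives `M ‖x₁ - x₂‖ ≤ √(M (1 - M)) (√λ₁ + √λ₂)`, and
`(1 - M) / M ≤ ζ / (1 - ζ)`.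
-/

open MeasureTheory Real
open scoped BigOperators RealInnerProductSpace Classical

section WeightedMeans

variable {ι E : Type*} [Fintype ι] [NormedAddCommGroup E] [InnerProductSpace ℝ E]

theorem sq_sum_mul_le_sum_mul_sum_mul_sq {a f : ι → ℝ} (ha : ∀ i, 0 ≤ a i) :
    (∑ i, a i * f i) ^ 2 ≤ (∑ i, a i) * ∑ i, a i * f i ^ 2 :=
  Finset.sum_sq_le_sum_mul_sum_of_sq_le_mul _ (fun i _ => ha i)
    (fun i _ => mul_nonneg (ha i) (sq_nonneg _)) fun i _ => le_of_eq (by ring)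

theorem sq_sum_mul_le_of_sum_mul_eq_zero {w m f : ι → ℝ} (hm : ∀ i, 0 ≤ m i)
    (hmw : ∀ i, m i ≤ w i) (hw : ∑ i, w i = 1) (hf : ∑ i, w i * f i = 0) :
    (∑ i, m i * f i) ^ 2 ≤ (∑ i, m i) * (1 - ∑ i, m i) * ∑ i, w i * f i ^ 2 := by
  have hwm : ∀ i, 0 ≤ w i - m i := fun i => sub_nonneg.2 (hmw i)
  have hM : 0 ≤ ∑ i, m i := Finset.sum_nonneg fun i _ => hm i
  have hM' : ∑ i, (w i - m i) = 1 - ∑ i, m i := by rw [Finset.sum_sub_distrib, hw]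
  have h1M : 0 ≤ 1 - ∑ i, m i := hM' ▸ Finset.sum_nonneg fun i _ => hwm i
  have hcancel : ∑ i, (w i - m i) * f i = -∑ i, m i * f i := by
    simp only [sub_mul, Finset.sum_sub_distrib, hf, zero_sub]
  have hsplit : ∑ i, (w i - m i) * f i ^ 2 + ∑ i, m i * f i ^ 2 = ∑ i, w i * f i ^ 2 := by
    rw [← Finset.sum_add_distrib]; simp only [sub_mul, sub_add_cancel]
  have hB := sq_sum_mul_le_sum_mul_sum_mul_sq (f := f) hm
  have hA := sq_sum_mul_le_sum_mul_sum_mul_sq (f := f) hwm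
  rw [hcancel, neg_sq, hM'] at hA
  rw [← hsplit]
  -- with `s = ∑ m f`, `M = ∑ m`: `s² = (1 - M) s² + M s² ≤ M (1 - M) (∑ m f² + ∑ (w - m) f²)`
  nlinarith [mul_le_mul_of_nonneg_left hA hM, mul_le_mul_of_nonneg_left hB h1M]

theorem inner_sum_smul_sub_sum_smul (m : ι → ℝ) (y : ι → E) (x v : E) :
    ⟪∑ i, m i • y i - (∑ i, m i) • x, v⟫ = ∑ i, m i * ⟪y i - x, v⟫ := by
  simp only [Finset.sum_smul, ← Finset.sum_sub_distrib, ← smul_sub, sum_inner,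
    real_inner_smul_left]

theorem norm_le_of_forall_inner_le {u : E} {C : ℝ} (hC : 0 ≤ C)
    (h : ∀ v : E, ‖v‖ = 1 → ⟪u, v⟫ ≤ C) : ‖u‖ ≤ C := by
  rcases eq_or_ne u 0 with rfl | hu
  · simpa using hC
  have hu' : ‖u‖ ≠ 0 := norm_ne_zero_iff.2 hu
  calc ‖u‖ = ⟪u, ‖u‖⁻¹ • u⟫ := by
        rw [real_inner_smul_right, real_inner_self_eq_norm_mul_norm, inv_mul_cancel_left₀ hu']
    _ ≤ C := h _ (by rw [norm_smul, norm_inv, norm_norm, inv_mul_cancel₀ hu'])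

theorem norm_sum_smul_sub_le {w m : ι → ℝ} {y : ι → E} {Λ : ℝ} (hm : ∀ i, 0 ≤ m i)
    (hmw : ∀ i, m i ≤ w i) (hw : ∑ i, w i = 1)
    (hΛ : ∀ v : E, ‖v‖ = 1 → ∑ i, w i * ⟪y i - ∑ j, w j • y j, v⟫ ^ 2 ≤ Λ) :
    ‖∑ i, m i • y i - (∑ i, m i) • ∑ i, w i • y i‖ ≤
      √((∑ i, m i) * (1 - ∑ i, m i)) * √Λ := by
  set x := ∑ i, w i • y i
  have hM : 0 ≤ (∑ i, m i) * (1 - ∑ i, m i) := by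
    refine mul_nonneg (Finset.sum_nonneg fun i _ => hm i) (sub_nonneg.2 ?_)
    exact hw ▸ Finset.sum_le_sum fun i _ => hmw i
  refine norm_le_of_forall_inner_le (by positivity) fun v hv => ?_
  have hcentered : ∑ i, w i * ⟪y i - x, v⟫ = 0 := by
    rw [← inner_sum_smul_sub_sum_smul, hw, one_smul, sub_self, inner_zero_left]
  have hsq := sq_sum_mul_le_of_sum_mul_eq_zero hm hmw hw hcentered
  rw [inner_sum_smul_sub_sum_smul, ← sqrt_mul hM]
  exact le_sqrt_of_sq_le (hsq.trans (mul_le_mul_of_nonneg_left (hΛ v hv) hM))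

theorem sum_min_eq_one_sub_half_sum_abs_sub {w₁ w₂ : ι → ℝ} (hs₁ : ∑ i, w₁ i = 1)
    (hs₂ : ∑ i, w₂ i = 1) :
    ∑ i, min (w₁ i) (w₂ i) = 1 - (1 / 2) * ∑ i, |w₁ i - w₂ i| := by
  have hmin : ∀ a b : ℝ, min a b = (a + b - |a - b|) / 2 := fun a b => by
    rcases le_total a b with h | h
    · rw [min_eq_left h, abs_of_nonpos (sub_nonpos.2 h)]; ring
    · rw [min_eq_right h, abs_of_nonneg (sub_nonneg.2 h)]; ring
  simp only [hmin, ← Finset.sum_div, Finset.sum_sub_distrib, Finset.sum_add_distrib, hs₁, hs₂]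
  ring

end WeightedMeans

theorem sqrt_mul_one_sub_le_mul_sqrt_div {M ζ : ℝ} (hζ : ζ < 1) (hM : 1 - ζ ≤ M) :
    √(M * (1 - M)) ≤ M * √(ζ / (1 - ζ)) := by
  have hM0 : 0 ≤ M := by linarith
  calc √(M * (1 - M)) ≤ √(M ^ 2 * (ζ / (1 - ζ))) := by
        refine sqrt_le_sqrt ?_
        rw [mul_div_assoc', le_div_iff₀ (sub_pos.2 hζ)]
        nlinarith
    _ = M * √(ζ / (1 - ζ)) := by rw [sqrt_mul (sq_nonneg M), sqrt_sq hM0]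

theorem sum_mul_inner_sq_le_lamMax {n d : ℕ} (w : Fin n → ℝ)
    (y : Fin n → EuclideanSpace ℝ (Fin d)) (x : EuclideanSpace ℝ (Fin d))
    {v : EuclideanSpace ℝ (Fin d)} (hv : ‖v‖ = 1) :
    ∑ i, w i * ⟪y i - x, v⟫ ^ 2 ≤ lamMax w y x := by
  have hcont : Continuous fun u : EuclideanSpace ℝ (Fin d) => ∑ i, w i * ⟪y i - x, u⟫ ^ 2 := by
    fun_prop
  have hbdd := (isCompact_sphere (0 : EuclideanSpace ℝ (Fin d)) 1).bddAbove_image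
    hcont.continuousOn
  rw [Set.image_eq_range] at hbdd
  exact le_ciSup hbdd ⟨v, mem_sphere_zero_iff_norm.2 hv⟩

/-- if two probability weight vectors are close in total variation,
their weighted means are close (Lemma 2.2 of Zhu et al.). Here
`x_w = ∑ i, w i • y i` and `Σ_w` is the weighted covariance matrix around `x_w`. -/
theorem close_weights_close_means {n d : ℕ}
    (y : Fin n → EuclideanSpace ℝ (Fin d)) (w₁ w₂ : Fin n → ℝ)
    (hw₁ : ∀ i, 0 ≤ w₁ i) (hs₁ : ∑ i, w₁ i = 1)
    (hw₂ : ∀ i, 0 ≤ w₂ i) (hs₂ : ∑ i, w₂ i = 1)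
    (ζ : ℝ) (hζ1 : ζ < 1)
    (hTV : (1/2) * ∑ i, |w₁ i - w₂ i| ≤ ζ) :
    ‖(∑ i, w₁ i • y i) - ∑ i, w₂ i • y i‖ ≤
      (Real.sqrt (lamMax w₁ y (∑ i, w₁ i • y i)) +
        Real.sqrt (lamMax w₂ y (∑ i, w₂ i • y i))) * Real.sqrt (ζ / (1 - ζ)) := by
  set x₁ := ∑ i, w₁ i • y i
  set x₂ := ∑ i, w₂ i • y i
  set m := fun i => min (w₁ i) (w₂ i)
  set M := ∑ i, m i
  have hm : ∀ i, 0 ≤ m i := fun i => le_min (hw₁ i) (hw₂ i)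
  have hM : M = 1 - (1 / 2) * ∑ i, |w₁ i - w₂ i| := sum_min_eq_one_sub_half_sum_abs_sub hs₁ hs₂
  replace hM : 1 - ζ ≤ M := by linarith
  have hM0 : 0 < M := by linarith
  have h₁ := norm_sum_smul_sub_le hm (fun i => min_le_left _ _) hs₁
    fun v hv => sum_mul_inner_sq_le_lamMax w₁ y x₁ hv
  have h₂ := norm_sum_smul_sub_le hm (fun i => min_le_right _ _) hs₂
    fun v hv => sum_mul_inner_sq_le_lamMax w₂ y x₂ hv
  have hdiff : M • (x₁ - x₂) = (∑ i, m i • y i - M • x₂) - (∑ i, m i • y i - M • x₁) := by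
    rw [smul_sub]; abel
  refine le_of_mul_le_mul_left ?_ hM0
  calc M * ‖x₁ - x₂‖ = ‖M • (x₁ - x₂)‖ := by rw [norm_smul, norm_of_nonneg hM0.le]
    _ ≤ √(M * (1 - M)) * (√(lamMax w₁ y x₁) + √(lamMax w₂ y x₂)) := by
      rw [hdiff, mul_add, add_comm]; exact (norm_sub_le _ _).trans (add_le_add h₂ h₁)
    _ ≤ M * √(ζ / (1 - ζ)) * (√(lamMax w₁ y x₁) + √(lamMax w₂ y x₂)) := by
      gcongr; exact sqrt_mul_one_sub_le_mul_sqrt_div hζ1 hM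
    _ = M * ((√(lamMax w₁ y x₁) + √(lamMax w₂ y x₂)) * √(ζ / (1 - ζ))) := by ring
end

section
/- For ξ ∈ [0,1), let Δ_{n,ξ} = {w ∈ ℝⁿ : 0 ≤ wᵢ ≤ 1/((1−ξ)n) for all i, ∑_{i=1}^{n} wᵢ = 1}. If w⁽¹⁾ ∈ Δ_{n,ε₁} and w⁽²⁾ ∈ Δ_{n,ε₂} with ε₁, ε₂ ∈ [0,1), then the total variation distance satisfies TV(w⁽¹⁾, w⁽²⁾) ≤ max{ε₁, ε₂} / (1 − min{ε₁, ε₂}). -/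
open Real
open scoped BigOperators Classical

/-!
Since both vectors have total mass one, `TV(w₁, w₂) = ∑ᵢ (w₂ᵢ - w₁ᵢ)⁺`. Assume `ε₂ ≤ ε₁` and write
`cₖ = 1 / ((1 - εₖ) n)` for the two caps, so `c₂ ≤ c₁`. The scaled vector `(c₂ / c₁) w₁` lies below
both `w₁` and the cap `c₂ ≥ w₂`, hence `(w₂ᵢ - w₁ᵢ)⁺ ≤ c₂ - (c₂ / c₁) w₁ᵢ`, and summing gives
`TV ≤ n c₂ - c₂ / c₁ = ε₁ / (1 - ε₂)`.
-/

lemma posPart_sub_le_sub {a b c t : ℝ} (hb : b ≤ c) (hta : t ≤ a) (htc : t ≤ c) :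
    (b - a)⁺ ≤ c - t := by
  rw [posPart_def]
  exact max_le (by linarith) (by linarith)

lemma abs_sub_eq_two_mul_posPart_sub (a b : ℝ) : |a - b| = 2 * (b - a)⁺ - (b - a) := by
  rw [abs_sub_comm, ← posPart_add_negPart]
  linarith [posPart_sub_negPart (b - a)]

section Fintype

variable {ι : Type*} [Fintype ι]

lemma Finset.sum_abs_sub_eq_two_mul_sum_posPart_sub {w₁ w₂ : ι → ℝ}
    (hs : ∑ i, w₁ i = ∑ i, w₂ i) :
    ∑ i, |w₁ i - w₂ i| = 2 * ∑ i, (w₂ i - w₁ i)⁺ := by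
  simp only [abs_sub_eq_two_mul_posPart_sub, Finset.sum_sub_distrib, ← Finset.mul_sum, hs]
  ring

lemma sum_posPart_sub_le_of_le_caps {w₁ w₂ : ι → ℝ} {c₁ c₂ : ℝ}
    (hw₁ : ∀ i, 0 ≤ w₁ i ∧ w₁ i ≤ c₁) (hw₂ : ∀ i, w₂ i ≤ c₂) (hc₂ : 0 < c₂) (hc : c₂ ≤ c₁) :
    ∑ i, (w₂ i - w₁ i)⁺ ≤ Fintype.card ι * c₂ - c₂ / c₁ * ∑ i, w₁ i := by
  have hc₁ : 0 < c₁ := hc₂.trans_le hc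
  have hr : c₂ / c₁ ≤ 1 := div_le_one_of_le₀ hc hc₁.le
  have hpt (i : ι) : (w₂ i - w₁ i)⁺ ≤ c₂ - c₂ / c₁ * w₁ i := by
    obtain ⟨h0, hle⟩ := hw₁ i
    refine posPart_sub_le_sub (hw₂ i) (mul_le_of_le_one_left h0 hr) ?_
    calc c₂ / c₁ * w₁ i ≤ c₂ / c₁ * c₁ := by gcongr
      _ = c₂ := div_mul_cancel₀ c₂ hc₁.ne'
  calc ∑ i, (w₂ i - w₁ i)⁺ ≤ ∑ i, (c₂ - c₂ / c₁ * w₁ i) := Finset.sum_le_sum fun i _ => hpt i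
    _ = Fintype.card ι * c₂ - c₂ / c₁ * ∑ i, w₁ i := by
      rw [Finset.sum_sub_distrib, Finset.sum_const, Finset.mul_sum, nsmul_eq_mul, Finset.card_univ]

lemma half_sum_abs_sub_le_of_le {ε₁ ε₂ : ℝ} (hε₁ : ε₁ < 1) (hε : ε₂ ≤ ε₁) {w₁ w₂ : ι → ℝ}
    (hw₁ : ∀ i, 0 ≤ w₁ i ∧ w₁ i ≤ 1 / ((1 - ε₁) * Fintype.card ι)) (hs₁ : ∑ i, w₁ i = 1)
    (hw₂ : ∀ i, w₂ i ≤ 1 / ((1 - ε₂) * Fintype.card ι)) (hs₂ : ∑ i, w₂ i = 1) :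
    (1 / 2) * ∑ i, |w₁ i - w₂ i| ≤ ε₁ / (1 - ε₂) := by
  have hn : (0 : ℝ) < Fintype.card ι := by
    obtain ⟨i, -, -⟩ := Finset.exists_ne_zero_of_sum_ne_zero (hs₁ ▸ one_ne_zero)
    exact_mod_cast Fintype.card_pos_iff.mpr ⟨i⟩
  have h₁ : 0 < 1 - ε₁ := by linarith
  have h₂ : 0 < 1 - ε₂ := by linarith
  have hc : 1 / ((1 - ε₂) * Fintype.card ι) ≤ 1 / ((1 - ε₁) * Fintype.card ι) := by
    gcongr
  have hsum := sum_posPart_sub_le_of_le_caps hw₁ hw₂ (by positivity) hc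
  rw [hs₁, mul_one] at hsum
  calc (1 / 2) * ∑ i, |w₁ i - w₂ i| = ∑ i, (w₂ i - w₁ i)⁺ := by
        rw [Finset.sum_abs_sub_eq_two_mul_sum_posPart_sub (hs₁.trans hs₂.symm)]
        ring
    _ ≤ _ := hsum
    _ = ε₁ / (1 - ε₂) := by
        field_simp
        ring

end Fintype

theorem tv_bound_between_Delta_general {n : ℕ} (ε₁ ε₂ : ℝ)
    (hε₁1 : ε₁ < 1) (hε₂1 : ε₂ < 1)
    (w₁ w₂ : Fin n → ℝ)
    (hw₁ : ∀ i, 0 ≤ w₁ i ∧ w₁ i ≤ 1 / ((1 - ε₁) * n)) (hs₁ : ∑ i, w₁ i = 1)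
    (hw₂ : ∀ i, 0 ≤ w₂ i ∧ w₂ i ≤ 1 / ((1 - ε₂) * n)) (hs₂ : ∑ i, w₂ i = 1) :
    (1/2) * ∑ i, |w₁ i - w₂ i| ≤ max ε₁ ε₂ / (1 - min ε₁ ε₂) := by
  have hcard : (Fintype.card (Fin n) : ℝ) = n := by rw [Fintype.card_fin]
  rw [← hcard] at hw₁ hw₂
  rcases le_total ε₂ ε₁ with h | h
  · rw [max_eq_left h, min_eq_right h]
    exact half_sum_abs_sub_le_of_le hε₁1 h hw₁ hs₁ (fun i => (hw₂ i).2) hs₂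
  · rw [max_eq_right h, min_eq_left h]
    simpa only [abs_sub_comm] using
      half_sum_abs_sub_le_of_le hε₂1 h hw₂ hs₂ (fun i => (hw₁ i).2) hs₁

/-- total variation distance bound between probability weight vectors
in `Δ_{n,ε₁}` and `Δ_{n,ε₂}`. -/
theorem tv_bound_between_Delta {n : ℕ} (ε₁ ε₂ : ℝ)
    (hε₁0 : 0 ≤ ε₁) (hε₁1 : ε₁ < 1) (hε₂0 : 0 ≤ ε₂) (hε₂1 : ε₂ < 1)
    (w₁ w₂ : Fin n → ℝ)
    (hw₁ : ∀ i, 0 ≤ w₁ i ∧ w₁ i ≤ 1 / ((1 - ε₁) * n)) (hs₁ : ∑ i, w₁ i = 1)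
    (hw₂ : ∀ i, 0 ≤ w₂ i ∧ w₂ i ≤ 1 / ((1 - ε₂) * n)) (hs₂ : ∑ i, w₂ i = 1) :
    (1/2) * ∑ i, |w₁ i - w₂ i| ≤ max ε₁ ε₂ / (1 - min ε₁ ε₂) :=
  tv_bound_between_Delta_general ε₁ ε₂ hε₁1 hε₂1 w₁ w₂ hw₁ hs₁ hw₂ hs₂
end
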